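/- arXiv:2509.07972 — 2 statements merged into one kernel-verified Lean document; each statement's English description precedes it below -/
import Mathlib

section
/- Let f : ℝ^d → ℝ be (ρ, K₀, K_ρ)-smooth with f* = inf f > −∞. Fix x, y ∈ ℝ^d and m > 0, and set a = K₀ + K_ρ(m + f(x) − f*)^ρ. If a‖y − x‖² + ‖y − x‖·‖∇f(x)‖ ≤ m, then ∫₀¹ [K₀ + K_ρ(f(x + v(y − x)) − f*)^ρ] dv ≤ a. -/
/-!
Along the segment `t ↦ x + t • (y - x)` the function cannot leave the sublevel set
`{f ≤ f x + m}` before `t = 1`: as long as it stays there the Hessian is bounded by `a`, so the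
gradient grows by at most `a ‖y - x‖ t`, and `f` grows at rate at most
`‖y - x‖ ‖∇f x‖ + a ‖y - x‖² ≤ m`, i.e. by at most `t m < m` at time `t < 1`.
A continuous induction makes this rigorous, and then the integrand is bounded by `a` pointwise.
-/

open Set InnerProductSpace

section Segment

variable {E F : Type*} [NormedAddCommGroup E] [NormedSpace ℝ E]
  [NormedAddCommGroup F] [NormedSpace ℝ F]

theorem norm_sub_le_of_norm_fderiv_le_on_segment {φ : E → F} (hφ : Differentiable ℝ φ)
    {x u : E} {c C : ℝ} (hc : 0 ≤ c) (hC : ∀ t ∈ Icc 0 c, ‖fderiv ℝ φ (x + t • u)‖ ≤ C) :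
    ‖φ (x + c • u) - φ x‖ ≤ C * ‖u‖ * c := by
  have hderiv (t : ℝ) : HasDerivAt (fun t : ℝ => φ (x + t • u)) (fderiv ℝ φ (x + t • u) u) t := by
    have hline : HasDerivAt (fun t : ℝ => x + t • u) u t := by
      simpa using ((hasDerivAt_id t).smul_const u).const_add x
    exact (hφ _).hasFDerivAt.comp_hasDerivAt t hline
  have := norm_image_sub_le_of_norm_deriv_le_segment' (C := C * ‖u‖)
    (fun t _ => (hderiv t).hasDerivWithinAt)
    (fun t ht => ((fderiv ℝ φ _).le_opNorm u).trans <|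
      mul_le_mul_of_nonneg_right (hC t (Ico_subset_Icc_self ht)) (norm_nonneg u))
    c (right_mem_Icc.2 hc)
  simpa using this

end Segment

section Gradient

variable {E : Type*} [NormedAddCommGroup E] [InnerProductSpace ℝ E] [CompleteSpace E]
  {f : E → ℝ}

theorem norm_fderiv_eq_norm_gradient (x : E) : ‖fderiv ℝ f x‖ = ‖gradient f x‖ := by
  rw [← toDual_gradient, LinearIsometryEquiv.norm_map]

theorem ContDiff.differentiable_gradient (hf : ContDiff ℝ 2 f) : Differentiable ℝ (gradient f) := by
  have hfderiv : Differentiable ℝ (fderiv ℝ f) :=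
    (hf.fderiv_right (m := 1) (by norm_num)).differentiable one_ne_zero
  have hgrad : gradient f = (toDual ℝ E).symm ∘ fderiv ℝ f := by
    funext w
    rw [Function.comp_apply, ← toDual_gradient, LinearIsometryEquiv.symm_apply_apply]
  rw [hgrad]
  exact (toDual ℝ E).symm.toContinuousLinearEquiv.differentiable.comp hfderiv

variable {x u : E} {a m : ℝ}

theorem apply_add_smul_le_add_mul_of_norm_fderiv_gradient_le (hf : ContDiff ℝ 2 f)
    (hhess : ∀ w, f w ≤ f x + m → ‖fderiv ℝ (gradient f) w‖ ≤ a)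
    (hcond : a * ‖u‖ ^ 2 + ‖u‖ * ‖gradient f x‖ ≤ m)
    {c : ℝ} (hc : c ∈ Icc 0 1) (hsub : ∀ t ∈ Icc 0 c, f (x + t • u) ≤ f x + m) :
    f (x + c • u) ≤ f x + c * m := by
  have ha : 0 ≤ a := (norm_nonneg _).trans <| hhess (x + (0 : ℝ) • u) (hsub 0 ⟨le_rfl, hc.1⟩)
  have hgrad : ∀ t ∈ Icc 0 c, ‖fderiv ℝ f (x + t • u)‖ ≤ ‖gradient f x‖ + a * ‖u‖ := by
    intro t ht
    have hdrift : ‖gradient f (x + t • u) - gradient f x‖ ≤ a * ‖u‖ * t :=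
      norm_sub_le_of_norm_fderiv_le_on_segment hf.differentiable_gradient ht.1
        fun s hs => hhess _ (hsub s ⟨hs.1, hs.2.trans ht.2⟩)
    have : a * ‖u‖ * t ≤ a * ‖u‖ := mul_le_of_le_one_right (by positivity) (ht.2.trans hc.2)
    rw [norm_fderiv_eq_norm_gradient]
    linarith [norm_le_norm_add_norm_sub' (gradient f (x + t • u)) (gradient f x)]
  have hincr := norm_sub_le_of_norm_fderiv_le_on_segment (hf.differentiable two_ne_zero) hc.1 hgrad
  calc f (x + c • u) ≤ f x + (‖gradient f x‖ + a * ‖u‖) * ‖u‖ * c := by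
        linarith [le_abs_self (f (x + c • u) - f x), Real.norm_eq_abs (f (x + c • u) - f x)]
    _ ≤ f x + c * m := by nlinarith [hc.1]

theorem apply_add_smul_le_of_norm_fderiv_gradient_le (hf : ContDiff ℝ 2 f) (hm : 0 < m)
    (hhess : ∀ w, f w ≤ f x + m → ‖fderiv ℝ (gradient f) w‖ ≤ a)
    (hcond : a * ‖u‖ ^ 2 + ‖u‖ * ‖gradient f x‖ ≤ m) :
    ∀ t ∈ Icc (0 : ℝ) 1, f (x + t • u) ≤ f x + m := by
  have hcont : Continuous fun t : ℝ => f (x + t • u) := hf.continuous.comp (by fun_prop)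
  refine fun t ht => IsClosed.Icc_subset_of_forall_mem_nhdsGT_of_Icc_subset
    ((isClosed_le hcont continuous_const).inter isClosed_Icc) (by simpa using hm.le) ?_ ht
  intro c hc hsub
  have hlt : f (x + c • u) < f x + m := by
    have := apply_add_smul_le_add_mul_of_norm_fderiv_gradient_le hf hhess hcond
      (Ico_subset_Icc_self hc) hsub
    nlinarith [hc.2]
  exact mem_nhdsWithin_of_mem_nhds <|
    (hcont.continuousAt.eventually_lt continuousAt_const hlt).mono fun _ h => h.le

end Gradient

theorem statement2_general (d : ℕ) (f : EuclideanSpace ℝ (Fin d) → ℝ)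
    (hf : ContDiff ℝ 2 f)
    (ρ K0 Kρ : ℝ) (hρ : 0 < ρ) (hKρ : 0 ≤ Kρ)
    (fstar : ℝ) (hglb : IsGLB (Set.range f) fstar)
    (hsmooth : ∀ w, ‖fderiv ℝ (gradient f) w‖ ≤ K0 + Kρ * (f w - fstar) ^ ρ)
    (x y : EuclideanSpace ℝ (Fin d)) (m : ℝ) (hm : 0 < m)
    (a : ℝ) (ha : a = K0 + Kρ * (m + f x - fstar) ^ ρ)
    (hcond : a * ‖y - x‖ ^ 2 + ‖y - x‖ * ‖gradient f x‖ ≤ m) :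
    (∫ v in (0:ℝ)..1, (K0 + Kρ * (f (x + v • (y - x)) - fstar) ^ ρ)) ≤ a := by
  have hbound : ∀ w, f w ≤ f x + m → K0 + Kρ * (f w - fstar) ^ ρ ≤ a := by
    intro w hw
    have hfstar : fstar ≤ f w := hglb.1 ⟨w, rfl⟩
    rw [ha]
    gcongr
    linarith
  have hsub := apply_add_smul_le_of_norm_fderiv_gradient_le hf hm
    (fun w hw => (hsmooth w).trans (hbound w hw)) hcond
  have hcont : Continuous fun v : ℝ => K0 + Kρ * (f (x + v • (y - x)) - fstar) ^ ρ := by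
    have := hf.continuous
    fun_prop (disch := exact hρ.le)
  calc (∫ v in (0:ℝ)..1, (K0 + Kρ * (f (x + v • (y - x)) - fstar) ^ ρ))
      ≤ ∫ _ in (0:ℝ)..1, a :=
        intervalIntegral.integral_mono_on zero_le_one (hcont.intervalIntegrable 0 1)
          intervalIntegrable_const fun v hv => hbound _ (hsub v hv)
    _ = a := by simp

/-- Lemma on the integrated smoothness bound. If `f` is
`(ρ, K₀, K_ρ)`-smooth, `m > 0`, `a = K₀ + K_ρ(m + f(x) − f*)^ρ`, and
`a‖y − x‖² + ‖y − x‖·‖∇f(x)‖ ≤ m`, then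
`∫₀¹ K₀ + K_ρ (f(x + v(y − x)) − f*)^ρ dv ≤ a`. -/
theorem statement2 (d : ℕ) (f : EuclideanSpace ℝ (Fin d) → ℝ)
    (hf : ContDiff ℝ 2 f)
    (ρ K0 Kρ : ℝ) (hρ : 0 < ρ) (hK0 : 0 ≤ K0) (hKρ : 0 ≤ Kρ)
    (fstar : ℝ) (hglb : IsGLB (Set.range f) fstar)
    (hsmooth : ∀ w, ‖fderiv ℝ (gradient f) w‖ ≤ K0 + Kρ * (f w - fstar) ^ ρ)
    (x y : EuclideanSpace ℝ (Fin d)) (m : ℝ) (hm : 0 < m)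
    (a : ℝ) (ha : a = K0 + Kρ * (m + f x - fstar) ^ ρ)
    (hcond : a * ‖y - x‖ ^ 2 + ‖y - x‖ * ‖gradient f x‖ ≤ m) :
    (∫ v in (0:ℝ)..1, (K0 + Kρ * (f (x + v • (y - x)) - fstar) ^ ρ)) ≤ a :=
  statement2_general d f hf ρ K0 Kρ hρ hKρ fstar hglb hsmooth x y m hm a ha hcond
end

section
/- Let f : ℝ^d → ℝ be (ρ, K₀, K_ρ)-smooth with K₀, K_ρ > 0 and f* = inf f > −∞, and let w₀ ∈ ℝ^d with Δ₀ = f(w₀) − f* < ∞. Consider gradient descent with the constant learning rate η = (1/(4√2 + 4)) · min{1/K₀, 1/(3^ρ K_ρ Δ₀^ρ)}, i.e. w_{t+1} = w_t − η ∇f(w_t). Then for every T ≥ 1 and all t < T: Δ_{t+1} ≤ Δ_t, where Δ_t = f(w_t) − f*, and min_{t < T} ‖∇f(w_t)‖² ≤ 2Δ₀ / (η T). -/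
/-!
Along the segment from `w` to `w - η ∇f(w)` the Hessian is bounded by `L = K₀ + K_ρ (3Δ₀)^ρ`
as long as the segment stays in the sublevel set `{f < f* + 3Δ₀}`, and there `η L ≤ 1/2` yields
the descent inequality `f(w - η ∇f(w)) ≤ f(w) - (η/2) ‖∇f(w)‖²`; that inequality in turn keeps
the segment inside the sublevel set, and a continuous induction along the segment breaks the
circularity. So the iterates never leave the sublevel set, each step gains `(η/2) ‖∇f(w_t)‖²`,
and telescoping bounds the smallest gradient. If `Δ₀ = 0`, then `η = 0` (as `1 / 0 = 0` in Lean)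
and `w₀` is a minimiser, so its gradient vanishes.
-/

open Real Set

theorem ContinuousOn.forall_lt_of_forall_Ico_lt_imp_lt {α β : Type*}
    [ConditionallyCompleteLinearOrder α] [TopologicalSpace α] [OrderTopology α]
    [LinearOrder β] [TopologicalSpace β] [ClosedIciTopology β]
    {φ : α → β} {a b : α} {M : β} (hφ : ContinuousOn φ (Icc a b))
    (hstep : ∀ x ∈ Icc a b, (∀ u ∈ Ico a x, φ u < M) → φ x < M) :
    ∀ x ∈ Icc a b, φ x < M := by
  by_contra! hexit
  set B := Icc a b ∩ φ ⁻¹' Ici M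
  have hB : IsClosed B := hφ.preimage_isClosed_of_isClosed isClosed_Icc isClosed_Ici
  have hBbdd : BddBelow B := ⟨a, fun x hx => hx.1.1⟩
  have hxB : sInf B ∈ B := hB.csInf_mem hexit hBbdd
  refine (hstep _ hxB.1 fun u hu => ?_).not_ge hxB.2
  by_contra! hu'
  exact (csInf_le hBbdd ⟨⟨hu.1, hu.2.le.trans hxB.1.2⟩, hu'⟩).not_gt hu.2

theorem hasDerivAt_sub_smul {E : Type*} [NormedAddCommGroup E] [NormedSpace ℝ E] (w v : E)
    (s : ℝ) : HasDerivAt (fun s : ℝ => w - s • v) (-v) s := by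
  simpa using ((hasDerivAt_id s).smul_const v).const_sub w

section

variable {E : Type*} [NormedAddCommGroup E] [InnerProductSpace ℝ E] [CompleteSpace E]
  {f : E → ℝ}

theorem ContDiff.gradient {n m : WithTop ℕ∞} (hf : ContDiff ℝ n f) (hmn : m + 1 ≤ n) :
    ContDiff ℝ m (gradient f) :=
  (InnerProductSpace.toDual ℝ E).symm.contDiff.comp (hf.fderiv_right hmn)

theorem IsLocalMin.gradient_eq_zero {w : E} (h : IsLocalMin f w) : gradient f w = 0 := by
  simp [gradient, h.fderiv_eq_zero]

theorem hasDerivAt_comp_sub_smul {w v : E} {s : ℝ} (hf : DifferentiableAt ℝ f (w - s • v)) :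
    HasDerivAt (fun s : ℝ => f (w - s • v)) (-inner ℝ (gradient f (w - s • v)) v) s := by
  have h := hf.hasFDerivAt.comp_hasDerivAt s (hasDerivAt_sub_smul w v s)
  rwa [map_neg, ← inner_gradient_left] at h

theorem norm_gradient_sub_smul_sub_le (hg : Differentiable ℝ (gradient f)) (w v : E) {L b : ℝ}
    (hH : ∀ u ∈ Ico 0 b, ‖fderiv ℝ (gradient f) (w - u • v)‖ ≤ L) :
    ∀ x ∈ Icc 0 b, ‖gradient f (w - x • v) - gradient f w‖ ≤ L * ‖v‖ * x := by
  have hderiv : ∀ x : ℝ, HasDerivAt (fun u : ℝ => gradient f (w - u • v))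
      (fderiv ℝ (gradient f) (w - x • v) (-v)) x :=
    fun x => (hg _).hasFDerivAt.comp_hasDerivAt x (hasDerivAt_sub_smul w v x)
  have hbound : ∀ u ∈ Ico 0 b, ‖fderiv ℝ (gradient f) (w - u • v) (-v)‖ ≤ L * ‖v‖ := fun u hu =>
    ((fderiv ℝ (gradient f) (w - u • v)).le_opNorm _).trans <| by
      rw [norm_neg]; exact mul_le_mul_of_nonneg_right (hH u hu) (norm_nonneg v)
  simpa using norm_image_sub_le_of_norm_deriv_le_segment'
    (fun x _ => (hderiv x).hasDerivWithinAt) hbound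

theorem apply_sub_smul_gradient_le_of_norm_fderiv_gradient_le (hf : Differentiable ℝ f)
    (hg : Differentiable ℝ (gradient f)) {w : E} {L η b : ℝ} (hηL : η * L ≤ 1 / 2)
    (hb : b ∈ Icc 0 η) (hH : ∀ u ∈ Ico 0 b, ‖fderiv ℝ (gradient f) (w - u • gradient f w)‖ ≤ L) :
    f (w - b • gradient f w) ≤ f w - b / 2 * ‖gradient f w‖ ^ 2 := by
  set g := gradient f w
  have hφ : ∀ s : ℝ, HasDerivAt (fun s : ℝ => f (w - s • g))
      (-inner ℝ (gradient f (w - s • g)) g) s := fun s => hasDerivAt_comp_sub_smul (hf _)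
  have hslope : ∀ x ∈ Ioo 0 b, -inner ℝ (gradient f (w - x • g)) g ≤ -(‖g‖ ^ 2 / 2) := by
    intro x hx
    have hL : 0 ≤ L := (norm_nonneg _).trans (hH 0 ⟨le_rfl, hx.1.trans hx.2⟩)
    have hLx : L * x ≤ 1 / 2 := by nlinarith [hb.2, hx.2]
    have hdrift := norm_gradient_sub_smul_sub_le hg w g hH x ⟨hx.1.le, hx.2.le⟩
    calc -inner ℝ (gradient f (w - x • g)) g
        = -‖g‖ ^ 2 - inner ℝ (gradient f (w - x • g) - g) g := by
          rw [inner_sub_left, real_inner_self_eq_norm_sq]; ring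
      _ ≤ -‖g‖ ^ 2 + ‖gradient f (w - x • g) - g‖ * ‖g‖ := by
          linarith [neg_abs_le (inner ℝ (gradient f (w - x • g) - g) g),
            abs_real_inner_le_norm (gradient f (w - x • g) - g) g]
      _ ≤ -‖g‖ ^ 2 + L * ‖g‖ * x * ‖g‖ := by gcongr
      _ ≤ -(‖g‖ ^ 2 / 2) := by nlinarith [sq_nonneg ‖g‖]
  have hmvt := (convex_Icc 0 b).image_sub_le_mul_sub_of_deriv_le
    (fun s _ => (hφ s).continuousAt.continuousWithinAt)
    (fun s _ => (hφ s).differentiableAt.differentiableWithinAt)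
    (fun s hs => by rw [(hφ s).deriv]; exact hslope s (by rwa [interior_Icc] at hs))
    0 (left_mem_Icc.2 hb.1) b (right_mem_Icc.2 hb.1) hb.1
  simp only [zero_smul, sub_zero] at hmvt
  linarith

theorem apply_sub_smul_gradient_le_of_sublevel (hf : Differentiable ℝ f)
    (hg : Differentiable ℝ (gradient f)) {w : E} {L η M : ℝ} (hη : 0 ≤ η)
    (hηL : η * L ≤ 1 / 2) (hw : f w < M)
    (hH : ∀ v, f v < M → ‖fderiv ℝ (gradient f) v‖ ≤ L) :
    f (w - η • gradient f w) ≤ f w - η / 2 * ‖gradient f w‖ ^ 2 := by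
  have hcont : ContinuousOn (fun s : ℝ => f (w - s • gradient f w)) (Icc 0 η) := fun s _ =>
    (hasDerivAt_comp_sub_smul (hf _)).continuousAt.continuousWithinAt
  have hsub : ∀ x ∈ Icc 0 η, f (w - x • gradient f w) < M :=
    hcont.forall_lt_of_forall_Ico_lt_imp_lt fun x hx hlt =>
      (apply_sub_smul_gradient_le_of_norm_fderiv_gradient_le hf hg hηL hx
        fun u hu => hH _ (hlt u hu)).trans_lt <| by nlinarith [hx.1, sq_nonneg ‖gradient f w‖]
  exact apply_sub_smul_gradient_le_of_norm_fderiv_gradient_le hf hg hηL ⟨hη, le_rfl⟩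
    fun u hu => hH _ (hsub u ⟨hu.1, hu.2.le⟩)

theorem gradientDescent_apply_succ_le (hf : Differentiable ℝ f)
    (hg : Differentiable ℝ (gradient f)) {w : ℕ → E} {L η M : ℝ} (hη : 0 ≤ η)
    (hηL : η * L ≤ 1 / 2) (hw : f (w 0) < M)
    (hH : ∀ v, f v < M → ‖fderiv ℝ (gradient f) v‖ ≤ L)
    (hrec : ∀ t, w (t + 1) = w t - η • gradient f (w t)) (t : ℕ) :
    f (w (t + 1)) ≤ f (w t) - η / 2 * ‖gradient f (w t)‖ ^ 2 := by
  have hstep : ∀ t, f (w t) < M → f (w (t + 1)) ≤ f (w t) - η / 2 * ‖gradient f (w t)‖ ^ 2 :=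
    fun t ht => hrec t ▸ apply_sub_smul_gradient_le_of_sublevel hf hg hη hηL ht hH
  have hsub : ∀ t, f (w t) < M := by
    intro t
    induction t with
    | zero => exact hw
    | succ t ih => nlinarith [hstep t ih, sq_nonneg ‖gradient f (w t)‖]
  exact hstep t (hsub t)

end

theorem exists_lt_le_div_of_forall_succ_le_sub {a g : ℕ → ℝ} {c m : ℝ} (hc : 0 < c)
    (hm : ∀ t, m ≤ a t) (hstep : ∀ t, a (t + 1) ≤ a t - c * g t) {T : ℕ} (hT : 0 < T) :
    ∃ t < T, g t ≤ (a 0 - m) / (c * T) := by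
  have hT' : (0 : ℝ) < T := Nat.cast_pos.2 hT
  have hsum : ∑ t ∈ Finset.range T, c * g t ≤ ∑ _t ∈ Finset.range T, (a 0 - m) / T :=
    calc ∑ t ∈ Finset.range T, c * g t
        ≤ ∑ t ∈ Finset.range T, (a t - a (t + 1)) :=
          Finset.sum_le_sum fun t _ => by linarith [hstep t]
      _ = a 0 - a T := Finset.sum_range_sub' a T
      _ ≤ a 0 - m := by linarith [hm T]
      _ = ∑ _t ∈ Finset.range T, (a 0 - m) / T := by
          rw [Finset.sum_const, Finset.card_range, nsmul_eq_mul]; field_simp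
  obtain ⟨t, ht, hle⟩ := Finset.exists_le_of_sum_le (Finset.nonempty_range_iff.2 hT.ne') hsum
  refine ⟨t, Finset.mem_range.1 ht, ?_⟩
  rw [le_div_iff₀ (by positivity)]
  linarith [(le_div_iff₀ hT').1 hle]

theorem min_one_div_mul_add_le_two {a b : ℝ} (ha : 0 < a) (hb : 0 < b) :
    min (1 / a) (1 / b) * (a + b) ≤ 2 := by
  have h₁ : min (1 / a) (1 / b) * a ≤ 1 :=
    (mul_le_mul_of_nonneg_right (min_le_left _ _) ha.le).trans_eq (one_div_mul_cancel ha.ne')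
  have h₂ : min (1 / a) (1 / b) * b ≤ 1 :=
    (mul_le_mul_of_nonneg_right (min_le_right _ _) hb.le).trans_eq (one_div_mul_cancel hb.ne')
  linarith [mul_add (min (1 / a) (1 / b)) a b]

theorem learningRate_mul_le_half {ρ K0 Kρ D η : ℝ} (hK0 : 0 < K0) (hKρ : 0 < Kρ) (hD : 0 < D)
    (hη : η = 1 / (4 * √2 + 4) * min (1 / K0) (1 / (3 ^ ρ * Kρ * D ^ ρ))) :
    η * (K0 + Kρ * (3 * D) ^ ρ) ≤ 1 / 2 := by
  have hmin := min_one_div_mul_add_le_two hK0 (by positivity : 0 < 3 ^ ρ * Kρ * D ^ ρ)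
  have hc : 4 ≤ 4 * √2 + 4 := by linarith [sqrt_nonneg 2]
  calc η * (K0 + Kρ * (3 * D) ^ ρ)
      = min (1 / K0) (1 / (3 ^ ρ * Kρ * D ^ ρ)) * (K0 + 3 ^ ρ * Kρ * D ^ ρ) / (4 * √2 + 4) := by
        rw [hη, mul_rpow (by norm_num) hD.le]; ring
    _ ≤ 2 / 4 := div_le_div₀ (by norm_num) hmin (by norm_num) hc
    _ = 1 / 2 := by norm_num

/-- GD with constant learning rate, nonconvex case. For a
`(ρ, K₀, K_ρ)`-smooth function with `K₀, K_ρ > 0`, gradient descent with the constant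
learning rate `η = (1/(4√2+4)) min{1/K₀, 1/(3^ρ K_ρ Δ₀^ρ)}` satisfies `Δ_{t+1} ≤ Δ_t` and
`min_{t<T} ‖∇f(w_t)‖² ≤ 2Δ₀ / (ηT)`. -/
theorem statement9 (d : ℕ) (f : EuclideanSpace ℝ (Fin d) → ℝ)
    (hf : ContDiff ℝ 2 f)
    (ρ K0 Kρ : ℝ) (hρ : 0 < ρ) (hK0 : 0 < K0) (hKρ : 0 < Kρ)
    (fstar : ℝ) (hglb : IsGLB (Set.range f) fstar)
    (hsmooth : ∀ v, ‖fderiv ℝ (gradient f) v‖ ≤ K0 + Kρ * (f v - fstar) ^ ρ)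
    (w : ℕ → EuclideanSpace ℝ (Fin d))
    (η : ℝ)
    (hη : η = (1 / (4 * Real.sqrt 2 + 4)) *
      min (1 / K0) (1 / (3 ^ ρ * Kρ * (f (w 0) - fstar) ^ ρ)))
    (hrec : ∀ t, w (t + 1) = w t - η • gradient f (w t))
    (T : ℕ) (hT : 1 ≤ T) :
    (∀ t < T, f (w (t + 1)) - fstar ≤ f (w t) - fstar) ∧
    (∃ t < T, ‖gradient f (w t)‖ ^ 2 ≤ 2 * (f (w 0) - fstar) / (η * T)) := by
  have hlow : ∀ v, fstar ≤ f v := fun v => hglb.1 ⟨v, rfl⟩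
  rcases (sub_nonneg.2 (hlow (w 0))).eq_or_lt with hD | hD
  · have hη0 : η = 0 := by
      rw [hη, ← hD, zero_rpow hρ.ne', mul_zero, div_zero, min_eq_right (by positivity), mul_zero]
    have hmin : IsLocalMin f (w 0) := Filter.Eventually.of_forall fun v => by linarith [hlow v]
    exact ⟨fun t _ => by rw [hrec, hη0, zero_smul, sub_zero], 0, hT,
      by simp [hmin.gradient_eq_zero, ← hD]⟩
  set D := f (w 0) - fstar
  have hηpos : 0 < η := by rw [hη]; positivity
  have hηL := learningRate_mul_le_half hK0 hKρ hD hη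
  have hH : ∀ v, f v < fstar + 3 * D → ‖fderiv ℝ (gradient f) v‖ ≤ K0 + Kρ * (3 * D) ^ ρ :=
    fun v hv => (hsmooth v).trans <| add_le_add_right (mul_le_mul_of_nonneg_left
      (rpow_le_rpow (sub_nonneg.2 (hlow v)) (by linarith : f v - fstar ≤ 3 * D) hρ.le) hKρ.le) K0
  have hdesc := gradientDescent_apply_succ_le (hf.differentiable two_ne_zero)
    ((hf.gradient (m := 1) (by norm_num)).differentiable one_ne_zero) hηpos.le hηL
    (by linarith) hH hrec
  refine ⟨fun t _ => by nlinarith [hdesc t, sq_nonneg ‖gradient f (w t)‖], ?_⟩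
  obtain ⟨t, ht, hle⟩ := exists_lt_le_div_of_forall_succ_le_sub (a := fun t => f (w t))
    (half_pos hηpos) (fun t => hlow (w t)) hdesc hT
  exact ⟨t, ht, hle.trans_eq (by ring)⟩
end
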